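/- Let X be a real Hilbert space, f : X → ℝ Fréchet differentiable with ∇f Lipschitz of modulus M_f and f strongly convex with modulus ω > 0, and ψ : X → (−∞,+∞] proper, closed, convex. Define G(x,t) := (1/t)(x − prox_{tψ}(x − t∇f(x))). Then for all t ∈ (0, 2ω/M_f²) the map x ↦ G(x,t) is strongly monotone with modulus ω − (t/2)M_f², i.e., ⟨G(x,t) − G(y,t), x − y⟩ ≥ (ω − (t/2)M_f²)‖x − y‖² for all x, y ∈ X. -/

import Mathlib

/-!
Write `u = x - t∇f(x)`, `v = y - t∇f(y)`, `p = prox_{tψ} u`, `q = prox_{tψ} v`. The optimality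
condition `(u - p)/t ∈ ∂ψ(p)` and monotonicity of `∂ψ` give firm nonexpansiveness
`⟪(u - p) - (v - q), p - q⟫ ≥ 0`. With `d = x - y`, `e = p - q`, `g = ∇f(x) - ∇f(y)` this reads
`⟪d - e, e⟫ ≥ t⟪g, e⟫`, hence
`t⟪G(x,t) - G(y,t), d⟫ = ‖d - e‖² + ⟪d - e, e⟫ ≥ ‖d - e‖² + tω‖d‖² - tM‖d‖‖d - e‖ ≥ t(ω - tM²/4)‖d‖²`
by strong monotonicity, Cauchy–Schwarz with the Lipschitz bound, and minimizing over `‖d - e‖`.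
-/

noncomputable section

/-- A function into the extended reals is proper if it never takes the value `-∞`
and is not identically `+∞`. -/
def ProperFn {X : Type*} (ψ : X → EReal) : Prop :=
  (∀ x, ψ x ≠ ⊥) ∧ ∃ x, ψ x ≠ ⊤

/-- Convexity for extended-real-valued functions. -/
def ConvexFnE {X : Type*} [AddCommMonoid X] [Module ℝ X] (ψ : X → EReal) : Prop :=
  ∀ x y : X, ∀ a b : ℝ, 0 ≤ a → 0 ≤ b → a + b = 1 →
    ψ (a • x + b • y) ≤ (a : EReal) * ψ x + (b : EReal) * ψ y

/-- The objective function defining the proximity operator `prox_{tψ}(z)`. -/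
def proxObj {X : Type*} [NormedAddCommGroup X] (ψ : X → EReal) (t : ℝ) (z x : X) : EReal :=
  (((1 / (2 * t)) * ‖x - z‖ ^ 2 : ℝ) : EReal) + ψ x

/-- `p` is the proximal point `prox_{tψ}(z)`, i.e. a (the) global minimizer of the
prox objective. -/
def IsProx {X : Type*} [NormedAddCommGroup X] (ψ : X → EReal) (t : ℝ) (z p : X) : Prop :=
  ∀ x, proxObj ψ t z p ≤ proxObj ψ t z x

/-- The convex subdifferential of an extended-real-valued function. -/
def subdiffE {X : Type*} [NormedAddCommGroup X] [InnerProductSpace ℝ X]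
    (ψ : X → EReal) (x : X) : Set X :=
  {v | ∀ y, ψ x + ((inner ℝ v (y - x) : ℝ) : EReal) ≤ ψ y}

open Filter Topology

theorem le_of_forall_le_add_mul {c A B : ℝ} (h : ∀ l : ℝ, 0 < l → l ≤ 1 → c ≤ A + l * B) :
    c ≤ A := by
  have hlim : Tendsto (fun l : ℝ => A + l * B) (𝓝[>] 0) (𝓝 A) :=
    tendsto_nhdsWithin_of_tendsto_nhds <|
      (by fun_prop : Continuous fun l : ℝ => A + l * B).tendsto' 0 A (by simp)
  exact ge_of_tendsto hlim <| by
    filter_upwards [Ioc_mem_nhdsGT one_pos] with l hl using h l hl.1 hl.2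

section Prox

variable {X : Type*} [NormedAddCommGroup X] {ψ : X → EReal} {t : ℝ} {z p : X}

theorem IsProx.ne_top (hψ : ProperFn ψ) (hp : IsProx ψ t z p) : ψ p ≠ ⊤ := by
  obtain ⟨hne_bot, x₀, hx₀⟩ := hψ
  intro hp_top
  have h := hp x₀
  rw [proxObj, proxObj, hp_top, EReal.coe_add_top, top_le_iff,
    ← EReal.coe_toReal hx₀ (hne_bot x₀), ← EReal.coe_add] at h
  exact EReal.coe_ne_top _ h

variable [InnerProductSpace ℝ X]

theorem IsProx.inv_smul_sub_mem_subdiffE (hψ : ProperFn ψ) (hconv : ConvexFnE ψ) (ht : 0 < t)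
    (hp : IsProx ψ t z p) : t⁻¹ • (z - p) ∈ subdiffE ψ p := by
  intro w
  obtain ⟨a, ha⟩ : ∃ a : ℝ, ψ p = a := ⟨_, (EReal.coe_toReal (hp.ne_top hψ) (hψ.1 p)).symm⟩
  rcases eq_or_ne (ψ w) ⊤ with hw | hw
  · simp [hw]
  obtain ⟨b, hb⟩ : ∃ b : ℝ, ψ w = b := ⟨_, (EReal.coe_toReal hw (hψ.1 w)).symm⟩
  rw [ha, hb, ← EReal.coe_add, EReal.coe_le_coe_iff, real_inner_smul_left]
  -- compare `p` with the points `p + l • (w - p)` of the segment to `w`, and let `l → 0`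
  refine le_of_forall_le_add_mul (B := (2 * t)⁻¹ * ‖w - p‖ ^ 2) fun l hl₀ hl₁ => ?_
  have hconv_l : ψ ((1 - l) • p + l • w) ≤ (((1 - l) * a + l * b : ℝ) : EReal) := by
    have h := hconv p w (1 - l) l (by linarith) hl₀.le (by ring)
    rwa [ha, hb, ← EReal.coe_mul, ← EReal.coe_mul, ← EReal.coe_add] at h
  have hmin : (2 * t)⁻¹ * ‖p - z‖ ^ 2 + a ≤
      (2 * t)⁻¹ * ‖(1 - l) • p + l • w - z‖ ^ 2 + ((1 - l) * a + l * b) := by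
    have h := hp ((1 - l) • p + l • w)
    rw [proxObj, proxObj, ha] at h
    have h' := h.trans (add_le_add le_rfl hconv_l)
    rwa [one_div, ← EReal.coe_add, ← EReal.coe_add, EReal.coe_le_coe_iff] at h'
  have hexpand : ‖(1 - l) • p + l • w - z‖ ^ 2 =
      ‖p - z‖ ^ 2 - 2 * l * inner ℝ (z - p) (w - p) + l ^ 2 * ‖w - p‖ ^ 2 := by
    rw [show (1 - l) • p + l • w - z = -(z - p) + l • (w - p) by module, norm_add_sq_real,
      norm_neg, inner_neg_left, real_inner_smul_right, norm_smul, Real.norm_of_nonneg hl₀.le,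
      norm_sub_rev z p]
    ring
  rw [hexpand] at hmin
  have h2t : 0 < 2 * t := by positivity
  field_simp at hmin ⊢
  nlinarith

theorem inner_sub_nonneg_of_mem_subdiffE {q a b : X} (hp : ψ p ≠ ⊤) (hp' : ψ p ≠ ⊥)
    (hq : ψ q ≠ ⊤) (hq' : ψ q ≠ ⊥) (ha : a ∈ subdiffE ψ p) (hb : b ∈ subdiffE ψ q) :
    0 ≤ inner ℝ (a - b) (p - q) := by
  have hpq := ha q
  have hqp := hb p
  rw [← EReal.coe_toReal hp hp', ← EReal.coe_toReal hq hq', ← EReal.coe_add,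
    EReal.coe_le_coe_iff] at hpq hqp
  rw [← neg_sub p q, inner_neg_right] at hpq
  rw [inner_sub_left]
  linarith

theorem IsProx.inner_sub_sub_nonneg {w q : X} (hψ : ProperFn ψ) (hconv : ConvexFnE ψ)
    (ht : 0 < t) (hp : IsProx ψ t z p) (hq : IsProx ψ t w q) :
    0 ≤ inner ℝ ((z - p) - (w - q)) (p - q) := by
  have h := inner_sub_nonneg_of_mem_subdiffE (hp.ne_top hψ) (hψ.1 p) (hq.ne_top hψ) (hψ.1 q)
    (hp.inv_smul_sub_mem_subdiffE hψ hconv ht) (hq.inv_smul_sub_mem_subdiffE hψ hconv ht)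
  rw [← smul_sub, real_inner_smul_left] at h
  exact nonneg_of_mul_nonneg_right h (inv_pos.mpr ht)

end Prox

section ProxGrad

variable {X : Type*} [NormedAddCommGroup X] [InnerProductSpace ℝ X]

theorem le_inner_sub_of_inner_sub_smul_sub_nonneg {d e g : X} {t ω M : ℝ} (ht : 0 ≤ t)
    (hfirm : 0 ≤ inner ℝ (d - t • g - e) e) (hsc : ω * ‖d‖ ^ 2 ≤ inner ℝ g d)
    (hlip : ‖g‖ ≤ M * ‖d‖) :
    t * (ω - t / 4 * M ^ 2) * ‖d‖ ^ 2 ≤ inner ℝ (d - e) d := by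
  have hsplit : inner ℝ (d - e) d =
      ‖d - e‖ ^ 2 + inner ℝ (d - t • g - e) e + t * inner ℝ g d - t * inner ℝ g (d - e) := by
    simp only [inner_sub_left, inner_sub_right, real_inner_smul_left, ← real_inner_self_eq_norm_sq,
      real_inner_comm d e]
    ring
  have hcs : inner ℝ g (d - e) ≤ M * ‖d‖ * ‖d - e‖ :=
    (real_inner_le_norm _ _).trans (mul_le_mul_of_nonneg_right hlip (norm_nonneg _))
  nlinarith [sq_nonneg (2 * ‖d - e‖ - t * M * ‖d‖), mul_le_mul_of_nonneg_left hcs ht,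
    mul_le_mul_of_nonneg_left hsc ht]

/-- The proximal-gradient residual `G(x, t) = (x - prox_{tψ}(x - t ∇f(x))) / t`. -/
def proxGradResidual (prox f' : X → X) (t : ℝ) (x : X) : X :=
  (1 / t) • (x - prox (x - t • f' x))

theorem proxGradResidual_strongly_monotone {ψ : X → EReal} {prox f' : X → X} {t ω M : ℝ}
    (hψ : ProperFn ψ) (hconv : ConvexFnE ψ) (ht : 0 < t) (hprox : ∀ z, IsProx ψ t z (prox z))
    (hlip : ∀ x y, ‖f' x - f' y‖ ≤ M * ‖x - y‖)
    (hsc : ∀ x y, ω * ‖x - y‖ ^ 2 ≤ inner ℝ (f' x - f' y) (x - y)) (x y : X) :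
    (ω - t / 4 * M ^ 2) * ‖x - y‖ ^ 2 ≤
      inner ℝ (proxGradResidual prox f' t x - proxGradResidual prox f' t y) (x - y) := by
  set u := x - t • f' x
  set v := y - t • f' y
  have hfirm := (hprox u).inner_sub_sub_nonneg hψ hconv ht (hprox v)
  rw [show u - prox u - (v - prox v) = x - y - t • (f' x - f' y) - (prox u - prox v) by module]
    at hfirm
  have key := le_inner_sub_of_inner_sub_smul_sub_nonneg ht.le hfirm (hsc x y) (hlip x y)
  have hG : proxGradResidual prox f' t x - proxGradResidual prox f' t y =
      t⁻¹ • (x - y - (prox u - prox v)) := by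
    simp only [proxGradResidual, one_div]
    module
  rw [hG, real_inner_smul_left, ← div_eq_inv_mul, le_div_iff₀ ht]
  linarith

end ProxGrad

theorem stmt_14_general {X : Type*} [NormedAddCommGroup X] [InnerProductSpace ℝ X]
    (f' : X → X) (M_f ω : ℝ)
    (hlip : ∀ x y : X, ‖f' x - f' y‖ ≤ M_f * ‖x - y‖)
    (hsc : ∀ x y : X, ω * ‖x - y‖ ^ 2 ≤ (inner ℝ (f' x - f' y) (x - y) : ℝ))
    (ψ : X → EReal) (hproper : ProperFn ψ) (hconv : ConvexFnE ψ)
    (P : ℝ → X → X) (hP : ∀ t : ℝ, 0 < t → ∀ z : X, IsProx ψ t z (P t z)) :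
    ∀ t : ℝ, 0 < t → t < 2 * ω / M_f ^ 2 → ∀ x y : X,
      (ω - (t / 2) * M_f ^ 2) * ‖x - y‖ ^ 2 ≤
        (inner ℝ ((1 / t) • (x - P t (x - t • f' x)) - (1 / t) • (y - P t (y - t • f' y)))
          (x - y) : ℝ) := by
  intro t ht _ x y
  have hweaken : (ω - t / 2 * M_f ^ 2) * ‖x - y‖ ^ 2 ≤ (ω - t / 4 * M_f ^ 2) * ‖x - y‖ ^ 2 := by
    gcongr
    linarith [mul_nonneg ht.le (sq_nonneg M_f)]
  exact hweaken.trans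
    (proxGradResidual_strongly_monotone hproper hconv ht (hP t ht) hlip hsc x y)

theorem stmt_14 {X : Type*} [NormedAddCommGroup X] [InnerProductSpace ℝ X] [CompleteSpace X]
    (f : X → ℝ) (f' : X → X) (M_f ω : ℝ) (hω : 0 < ω)
    (hf : ∀ x : X, HasGradientAt f (f' x) x)
    (hlip : ∀ x y : X, ‖f' x - f' y‖ ≤ M_f * ‖x - y‖)
    (hsc : ∀ x y : X, ω * ‖x - y‖ ^ 2 ≤ (inner ℝ (f' x - f' y) (x - y) : ℝ))
    (ψ : X → EReal) (hproper : ProperFn ψ) (hconv : ConvexFnE ψ)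
    (hlsc : LowerSemicontinuous ψ)
    (P : ℝ → X → X) (hP : ∀ t : ℝ, 0 < t → ∀ z : X, IsProx ψ t z (P t z)) :
    ∀ t : ℝ, 0 < t → t < 2 * ω / M_f ^ 2 → ∀ x y : X,
      (ω - (t / 2) * M_f ^ 2) * ‖x - y‖ ^ 2 ≤
        (inner ℝ ((1 / t) • (x - P t (x - t • f' x)) - (1 / t) • (y - P t (y - t • f' y)))
          (x - y) : ℝ) :=
  stmt_14_general f' M_f ω hlip hsc ψ hproper hconv P hP
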